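/- Let p be an odd prime and H a p-subgroup of GL_2(ℤ/p^nℤ) stable under conjugation by C = [[1,0],[0,−1]]. Let 𝒟 be the subgroup of diagonal matrices in H. Then det(H) = det(𝒟) as subgroups of (ℤ/p^nℤ)^×. -/

import Mathlib

/-!
An element of the p-group `H` reduces mod `p` to a unipotent matrix, so for `g ∈ H` the reductions
of `g` and of `g * (C * g * C⁻¹)` have determinant `1` and trace `2`; since
`(a - d) ^ 2 = tr (g * (C * g * C⁻¹)) - 2 * det g`, the diagonal entries of `g` agree mod `p`.
The map `g ↦ g * (C * g * C⁻¹)` preserves `H`, squares the determinant and multiplies the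
off-diagonal entries by `±(d - a)`, so its `n`-th iterate is diagonal in `ℤ/pⁿ`. As `det h` has
`p`-power order and `p` is odd, `det h = det (h ^ j) ^ 2 ^ n` for some `j`, and this is the
determinant of the `n`-th iterate of `h ^ j`.
-/

open Matrix

theorem isNilpotent_sub_one_of_pow_char_pow_eq_one {R : Type*} [Ring R] (p : ℕ) [Fact p.Prime]
    [CharP R p] {g : R} {k : ℕ} (hg : g ^ p ^ k = 1) : IsNilpotent (g - 1) :=
  ⟨p ^ k, by rw [sub_pow_char_pow_of_commute p k (Commute.one_right g), hg, one_pow, sub_self]⟩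

section TwoByTwo

variable {R : Type*} [CommRing R]

theorem Matrix.trace_eq_two_and_det_eq_one_of_isNilpotent_sub_one [IsReduced R]
    {g : Matrix (Fin 2) (Fin 2) R} (hg : IsNilpotent (g - 1)) : g.trace = 2 ∧ g.det = 1 := by
  have htr : (g - 1).trace = 0 := (isNilpotent_trace_of_isNilpotent hg).eq_zero
  have hdet : (g - 1).det = 0 := by
    obtain ⟨k, hk⟩ := hg
    exact IsReduced.eq_zero _ ⟨k, by rw [← det_pow, hk, det_zero]⟩
  simp only [trace_fin_two, det_fin_two, sub_apply, one_apply_eq, one_apply_ne zero_ne_one,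
    one_apply_ne one_ne_zero] at htr hdet ⊢
  constructor
  · linear_combination htr
  · linear_combination hdet + htr

theorem Matrix.mul_conj_diag_one_neg_one (A : Matrix (Fin 2) (Fin 2) R) :
    A * (!![1, 0; 0, -1] * A * !![1, 0; 0, -1]) =
      !![A 0 0 ^ 2 - A 0 1 * A 1 0, A 0 1 * (A 1 1 - A 0 0);
        A 1 0 * (A 0 0 - A 1 1), A 1 1 ^ 2 - A 0 1 * A 1 0] := by
  rw [eta_fin_two A]
  simp only [mul_fin_two, of_apply, cons_val', cons_val_zero, cons_val_one, empty_val',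
    cons_val_fin_one]
  congr 1
  ext i j
  fin_cases i <;> fin_cases j <;> simp <;> ring

theorem Matrix.sq_sub_eq_trace_mul_conj_sub_two_mul_det (A : Matrix (Fin 2) (Fin 2) R) :
    (A 0 0 - A 1 1) ^ 2 = (A * (!![1, 0; 0, -1] * A * !![1, 0; 0, -1])).trace - 2 * A.det := by
  rw [mul_conj_diag_one_neg_one, trace_fin_two, det_fin_two]
  simp only [of_apply, cons_val', cons_val_zero, cons_val_one, empty_val', cons_val_fin_one]
  ring

end TwoByTwo

section MulConj

variable {G : Type*} [Group G]

def mulConj (c g : G) : G := g * (c * g * c⁻¹)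

theorem Subgroup.iterate_mulConj_mem {H : Subgroup G} {c : G}
    (hc : ∀ h ∈ H, c * h * c⁻¹ ∈ H) {g : G} (hg : g ∈ H) (k : ℕ) :
    (mulConj c)^[k] g ∈ H := by
  induction k with
  | zero => exact hg
  | succ k ih => rw [Function.iterate_succ_apply']; exact H.mul_mem ih (hc _ ih)

theorem MonoidHom.map_iterate_mulConj {A : Type*} [CommGroup A] (φ : G →* A) (c g : G)
    (k : ℕ) : φ ((mulConj c)^[k] g) = φ g ^ 2 ^ k := by
  induction k with
  | zero => simp
  | succ k ih =>
    rw [Function.iterate_succ_apply', mulConj, map_mul, map_mul, map_mul, map_inv, ih,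
      mul_inv_cancel_comm, ← pow_two, ← pow_mul, pow_succ]

end MulConj

theorem Matrix.GeneralLinearGroup.coe_mulConj_of_coe_eq {R : Type*} [CommRing R]
    {C : GL (Fin 2) R} (hC : (C : Matrix (Fin 2) (Fin 2) R) = !![1, 0; 0, -1]) (g : GL (Fin 2) R) :
    ((mulConj C g : GL (Fin 2) R) : Matrix (Fin 2) (Fin 2) R) =
      (g : Matrix (Fin 2) (Fin 2) R) *
        (!![1, 0; 0, -1] * (g : Matrix (Fin 2) (Fin 2) R) * !![1, 0; 0, -1]) := by
  have hCC : C * C = 1 := Units.ext <| by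
    rw [Units.val_mul, hC, mul_fin_two]; simp [one_fin_two]
  rw [mulConj, inv_eq_of_mul_eq_one_right hCC]
  simp only [coe_mul, hC]

theorem ZMod.natCast_dvd_of_castHom_eq_zero {p m : ℕ} (hpm : p ∣ m) {y : ZMod m}
    (hy : ZMod.castHom hpm (ZMod p) y = 0) : (p : ZMod m) ∣ y := by
  obtain ⟨z, rfl⟩ := ZMod.intCast_surjective y
  rw [map_intCast, ZMod.intCast_zmod_eq_zero_iff_dvd] at hy
  obtain ⟨w, rfl⟩ := hy
  exact ⟨w, by push_cast; rfl⟩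

section PSubgroup

variable {p m : ℕ} [Fact p.Prime]

theorem Matrix.GeneralLinearGroup.castHom_trace_det_of_pow_eq_one (hpm : p ∣ m)
    {g : GL (Fin 2) (ZMod m)} {k : ℕ} (hg : g ^ p ^ k = 1) :
    ZMod.castHom hpm (ZMod p) (g : Matrix (Fin 2) (Fin 2) (ZMod m)).trace = 2 ∧
      ZMod.castHom hpm (ZMod p) (g : Matrix (Fin 2) (Fin 2) (ZMod m)).det = 1 := by
  set f := ZMod.castHom hpm (ZMod p)
  have hpow : f.mapMatrix (g : Matrix (Fin 2) (Fin 2) (ZMod m)) ^ p ^ k = 1 := by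
    rw [← map_pow, ← Units.val_pow_eq_pow_val, hg, Units.val_one, map_one]
  rw [AddMonoidHom.map_trace, RingHom.map_det]
  exact trace_eq_two_and_det_eq_one_of_isNilpotent_sub_one
    (isNilpotent_sub_one_of_pow_char_pow_eq_one p hpow)

variable {H : Subgroup (GL (Fin 2) (ZMod m))} {C : GL (Fin 2) (ZMod m)}

theorem IsPGroup.natCast_dvd_diag_sub (hpm : p ∣ m) (hH : IsPGroup p H)
    (hC : (C : Matrix (Fin 2) (Fin 2) (ZMod m)) = !![1, 0; 0, -1])
    (hstab : ∀ h ∈ H, C * h * C⁻¹ ∈ H) {g : GL (Fin 2) (ZMod m)} (hg : g ∈ H) :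
    (p : ZMod m) ∣ (g : Matrix (Fin 2) (Fin 2) (ZMod m)) 0 0 - g 1 1 := by
  have hpow {h : GL (Fin 2) (ZMod m)} (hh : h ∈ H) : ∃ k, h ^ p ^ k = 1 := by
    obtain ⟨k, hk⟩ := hH ⟨h, hh⟩
    exact ⟨k, congrArg Subtype.val hk⟩
  obtain ⟨k, hk⟩ := hpow hg
  obtain ⟨l, hl⟩ := hpow (H.mul_mem hg (hstab g hg))
  have hdet := (GeneralLinearGroup.castHom_trace_det_of_pow_eq_one hpm hk).2
  have htr := (GeneralLinearGroup.castHom_trace_det_of_pow_eq_one hpm hl).1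
  rw [← mulConj, GeneralLinearGroup.coe_mulConj_of_coe_eq hC] at htr
  apply ZMod.natCast_dvd_of_castHom_eq_zero hpm
  refine IsReduced.eq_zero _ ⟨2, ?_⟩
  rw [← map_pow, sq_sub_eq_trace_mul_conj_sub_two_mul_det, map_sub, map_mul, htr, hdet, map_ofNat,
    mul_one, sub_self]

theorem IsPGroup.natCast_pow_dvd_offDiag_iterate_mulConj (hpm : p ∣ m) (hH : IsPGroup p H)
    (hC : (C : Matrix (Fin 2) (Fin 2) (ZMod m)) = !![1, 0; 0, -1])
    (hstab : ∀ h ∈ H, C * h * C⁻¹ ∈ H) {g : GL (Fin 2) (ZMod m)} (hg : g ∈ H) (k : ℕ) :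
    (p : ZMod m) ^ k ∣ ((mulConj C)^[k] g : Matrix (Fin 2) (Fin 2) (ZMod m)) 0 1 ∧
      (p : ZMod m) ^ k ∣ ((mulConj C)^[k] g : Matrix (Fin 2) (Fin 2) (ZMod m)) 1 0 := by
  induction k with
  | zero => simp
  | succ k ih =>
    have hdiag := hH.natCast_dvd_diag_sub hpm hC hstab (H.iterate_mulConj_mem hstab hg k)
    rw [Function.iterate_succ_apply', GeneralLinearGroup.coe_mulConj_of_coe_eq hC,
      mul_conj_diag_one_neg_one]
    simp only [of_apply, cons_val', cons_val_zero, cons_val_one, empty_val', cons_val_fin_one,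
      pow_succ]
    exact ⟨mul_dvd_mul ih.1 (by rw [← neg_sub]; exact hdiag.neg_right),
      mul_dvd_mul ih.2 hdiag⟩

end PSubgroup

theorem IsPGroup.isDiag_iterate_mulConj {p n : ℕ} [Fact p.Prime] (hn : n ≠ 0)
    {H : Subgroup (GL (Fin 2) (ZMod (p ^ n)))} (hH : IsPGroup p H) {C : GL (Fin 2) (ZMod (p ^ n))}
    (hC : (C : Matrix (Fin 2) (Fin 2) (ZMod (p ^ n))) = !![1, 0; 0, -1])
    (hstab : ∀ h ∈ H, C * h * C⁻¹ ∈ H) {g : GL (Fin 2) (ZMod (p ^ n))} (hg : g ∈ H) :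
    ((mulConj C)^[n] g : Matrix (Fin 2) (Fin 2) (ZMod (p ^ n))).IsDiag := by
  have hpn : (p : ZMod (p ^ n)) ^ n = 0 := by exact_mod_cast ZMod.natCast_self (p ^ n)
  obtain ⟨h01, h10⟩ :=
    hH.natCast_pow_dvd_offDiag_iterate_mulConj (dvd_pow_self p hn) hC hstab hg n
  rw [hpn, zero_dvd_iff] at h01 h10
  intro i j hij
  fin_cases i <;> fin_cases j <;> simp_all

/-- For an odd prime p and a p-subgroup H of GL_2(ℤ/p^nℤ) stable under
conjugation by C = [[1,0],[0,-1]], the determinants of elements of H coincide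
with the determinants of the diagonal elements of H. -/
theorem stmt16 (p : ℕ) (hp : p.Prime) (hodd : p ≠ 2) (n : ℕ) (hn : 0 < n)
    (H : Subgroup (GL (Fin 2) (ZMod (p ^ n)))) (hH : IsPGroup p H)
    (C : GL (Fin 2) (ZMod (p ^ n)))
    (hC : (C : Matrix (Fin 2) (Fin 2) (ZMod (p ^ n))) = !![1, 0; 0, -1])
    (hstab : ∀ h ∈ H, C * h * C⁻¹ ∈ H) :
    {x : (ZMod (p ^ n))ˣ | ∃ h ∈ H, Matrix.GeneralLinearGroup.det h = x}
      = {x : (ZMod (p ^ n))ˣ | ∃ h ∈ H,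
          ((h : Matrix (Fin 2) (Fin 2) (ZMod (p ^ n)))).IsDiag ∧
          Matrix.GeneralLinearGroup.det h = x} := by
  have : Fact p.Prime := ⟨hp⟩
  ext x
  refine ⟨fun ⟨h, hh, hx⟩ => ?_, fun ⟨h, hh, _, hx⟩ => ⟨h, hh, hx⟩⟩
  obtain ⟨k, hk⟩ := hH ⟨h, hh⟩
  have hxk : x ^ p ^ k = 1 := by
    rw [← hx, ← map_pow, show h ^ p ^ k = 1 from congrArg Subtype.val hk, map_one]
  have hcop : (2 ^ n).Coprime (orderOf x) :=
    (Nat.Coprime.pow n k ((Nat.coprime_primes Nat.prime_two hp).mpr hodd.symm)).coprime_dvd_right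
      (orderOf_dvd_of_pow_eq_one hxk)
  obtain ⟨j, hj⟩ := exists_pow_eq_self_of_coprime hcop
  refine ⟨(mulConj C)^[n] (h ^ j), H.iterate_mulConj_mem hstab (H.pow_mem hh j) n,
    hH.isDiag_iterate_mulConj hn.ne' hC hstab (H.pow_mem hh j), ?_⟩
  rw [MonoidHom.map_iterate_mulConj, map_pow, hx, ← pow_mul, mul_comm, pow_mul, hj]
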